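/- arXiv:math/0002028 — 4 statements merged into one kernel-verified Lean document; each statement's English description precedes it below -/
import Mathlib

section
/- Let X and Y be compact metric spaces and let ε > 0 be such that any two continuous maps from X to Y that are 4ε-close are homotopic. Then every ε-equicontinuous family of continuous maps f_α : X → Y (indexed by an arbitrary set A) falls into finitely many homotopy classes; that is, the set of homotopy classes {[f_α] : α ∈ A} is finite. -/
/-- The setoid on continuous maps given by (free) homotopy. -/
def homotopicSetoid (X Y : Type*) [TopologicalSpace X] [TopologicalSpace Y] :
    Setoid C(X, Y) :=
  ⟨ContinuousMap.Homotopic, ContinuousMap.Homotopic.equivalence⟩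

/-- Let `X` and `Y` be compact metric spaces and `ε > 0` be such that any two continuous
maps `X → Y` that are `4ε`-close are homotopic.  Then every `ε`-equicontinuous family of
continuous maps `f α : X → Y` falls into finitely many homotopy classes. -/
theorem finitely_many_homotopy_classes_of_equicontinuous
    {X Y : Type*} [MetricSpace X] [CompactSpace X] [MetricSpace Y] [CompactSpace Y]
    (ε : ℝ) (hε : 0 < ε)
    (hclose : ∀ f g : C(X, Y), (∀ x, dist (f x) (g x) ≤ 4 * ε) → f.Homotopic g)
    {A : Type*} (f : A → C(X, Y))
    (hequi : ∃ δ > 0, ∀ (α : A) (x x' : X), dist x x' < δ → dist (f α x) (f α x') < ε) :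
    (Set.range fun α => Quotient.mk (homotopicSetoid X Y) (f α)).Finite := by
  classical
  by_cases hA : Nonempty A
  swap
  · have : (Set.range fun α => Quotient.mk (homotopicSetoid X Y) (f α)) = ∅ := by
      simp [Set.range_eq_empty_iff, not_nonempty_iff.mp hA]
    simp [this]
  obtain ⟨δ, hδ, hδε⟩ := hequi
  obtain ⟨sX, -, hsXfin, hsXcov⟩ :=
    finite_cover_balls_of_compact (isCompact_univ (X := X)) hδ
  obtain ⟨sY, -, hsYfin, hsYcov⟩ :=
    finite_cover_balls_of_compact (isCompact_univ (X := Y)) hε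
  have hfX : Finite ↥sX := hsXfin.to_subtype
  have hfY : Finite ↥sY := hsYfin.to_subtype
  have key : ∀ (α : A) (x : sX), ∃ y ∈ sY, dist (f α x) y < ε := by
    intro α x
    have := hsYcov (Set.mem_univ (f α x))
    simpa using this
  choose g hg1 hg2 using key
  let G : A → (sX → sY) := fun α x => ⟨g α x, hg1 α x⟩
  -- maps with the same code are 4ε-close
  have hsame : ∀ α β : A, G α = G β →
      Quotient.mk (homotopicSetoid X Y) (f α) = Quotient.mk (homotopicSetoid X Y) (f β) := by
    intro α β hGeq
    apply Quotient.sound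
    apply hclose
    intro x
    obtain ⟨p, hp, hpd⟩ : ∃ p ∈ sX, x ∈ Metric.ball p δ := by
      have := hsXcov (Set.mem_univ x)
      simpa using this
    have hd : dist x p < δ := hpd
    have hgg : g α ⟨p, hp⟩ = g β ⟨p, hp⟩ := congrArg Subtype.val (congrFun hGeq ⟨p, hp⟩)
    have h1 : dist (f α x) (f α p) < ε := hδε α x p hd
    have h2 : dist (f α p) (g α ⟨p, hp⟩) < ε := hg2 α ⟨p, hp⟩
    have h3 : dist (g β ⟨p, hp⟩) (f β p) < ε := by
      rw [dist_comm]; exact hg2 β ⟨p, hp⟩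
    have h4 : dist (f β p) (f β x) < ε := hδε β p x (by rw [dist_comm] at hd; exact hd)
    calc dist (f α x) (f β x)
        ≤ dist (f α x) (f α p) + dist (f α p) (g α ⟨p, hp⟩)
          + dist (g β ⟨p, hp⟩) (f β p) + dist (f β p) (f β x) := by
          rw [hgg]
          exact (dist_triangle4 _ _ _ _).trans (by
            have := dist_triangle (f α p) (g β ⟨p, hp⟩) (f β p)
            linarith [dist_triangle4 (f α x) (f α p) (g β ⟨p, hp⟩) (f β x),
              dist_triangle (g β ⟨p, hp⟩) (f β p) (f β x)])
      _ ≤ 4 * ε := by linarith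
  -- factor through the finite code space
  let Φ : (↥sX → ↥sY) → Quotient (homotopicSetoid X Y) := fun φ =>
    if h : ∃ α, G α = φ then Quotient.mk (homotopicSetoid X Y) (f h.choose)
    else Quotient.mk (homotopicSetoid X Y) (f (Classical.arbitrary A))
  have hsub : (Set.range fun α => Quotient.mk (homotopicSetoid X Y) (f α)) ⊆
      Set.range Φ := by
    rintro q ⟨α, rfl⟩
    refine ⟨G α, ?_⟩
    have h : ∃ β, G β = G α := ⟨α, rfl⟩
    simp only [Φ, dif_pos h]
    exact hsame h.choose α h.choose_spec
  exact (Set.finite_range Φ).subset hsub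
end

section
/- Let X and Y be compact metric spaces and suppose there exists ε > 0 such that any two continuous maps from X to Y that are 4ε-close are homotopic. Then every almost equicontinuous sequence of continuous maps f_k : X → Y (k ∈ ℕ) falls into finitely many homotopy classes; that is, the set of homotopy classes {[f_k] : k ∈ ℕ} is finite. -/
/-- A sequence of maps `f k : X k → Y k` between metric spaces is `ε`-equicontinuous if there
is a common `δ > 0` such that all the maps move `δ`-close points to `ε`-close points. -/
def IsEquicontFamily {X Y : ℕ → Type*} [∀ k, MetricSpace (X k)] [∀ k, MetricSpace (Y k)]
    (I : Set ℕ) (f : ∀ k, X k → Y k) (ε : ℝ) : Prop :=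
  ∃ δ > 0, ∀ k ∈ I, ∀ x x' : X k, dist x x' < δ → dist (f k x) (f k x') < ε

/-- A sequence of maps `f k : X k → Y k` between metric spaces is almost equicontinuous if
for every `ε > 0` there is a finite set `F ⊆ ℕ` such that the subfamily indexed by `ℕ \ F`
is `ε`-equicontinuous. -/
def IsAlmostEquicont {X Y : ℕ → Type*} [∀ k, MetricSpace (X k)] [∀ k, MetricSpace (Y k)]
    (f : ∀ k, X k → Y k) : Prop :=
  ∀ ε > 0, ∃ F : Finset ℕ, IsEquicontFamily ((F : Set ℕ)ᶜ) f ε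

/-- Let `X` and `Y` be compact metric spaces such that for some `ε > 0` any two continuous
maps `X → Y` that are `4ε`-close are homotopic.  Then every almost equicontinuous sequence
of continuous maps `f k : X → Y` falls into finitely many homotopy classes. -/
theorem finitely_many_homotopy_classes_of_almost_equicontinuous
    {X Y : Type*} [MetricSpace X] [CompactSpace X] [MetricSpace Y] [CompactSpace Y]
    (hY : ∃ ε > 0, ∀ f g : C(X, Y), (∀ x, dist (f x) (g x) ≤ 4 * ε) → f.Homotopic g)
    (f : ℕ → C(X, Y))
    (hae : IsAlmostEquicont (X := fun _ => X) (Y := fun _ => Y) (fun k => ⇑(f k))) :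
    (Set.range fun k => Quotient.mk (homotopicSetoid X Y) (f k)).Finite := by
  obtain ⟨ε, hε, hhom⟩ := hY
  obtain ⟨F, δ, hδ, hec⟩ := hae ε hε
  -- finite δ-net on X and ε-net on Y
  obtain ⟨S, hSfin, hScov⟩ :=
    (Metric.totallyBounded_iff.mp (isCompact_univ (X := X)).totallyBounded) δ hδ
  obtain ⟨T, hTfin, hTcov⟩ :=
    (Metric.totallyBounded_iff.mp (isCompact_univ (X := Y)).totallyBounded) ε hε
  have hT : ∀ y : Y, ∃ c ∈ T, dist y c < ε := by
    intro y
    have := hTcov (Set.mem_univ y)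
    simpa [Metric.mem_ball, dist_comm] using this
  choose c hcT hcd using hT
  have hS : ∀ x : X, ∃ s ∈ S, dist x s < δ := by
    intro x
    have := hScov (Set.mem_univ x)
    simpa [Metric.mem_ball, dist_comm] using this
  choose s hsS hsd using hS
  haveI := hSfin.to_subtype
  haveI := hTfin.to_subtype
  set q : C(X, Y) → Quotient (homotopicSetoid X Y) := Quotient.mk _ with hq
  set Φ : ℕ → (S → T) := fun k x => ⟨c (f k x), hcT _⟩ with hΦdef
  have key : ∀ k ∉ F, ∀ l ∉ F, Φ k = Φ l → (f k).Homotopic (f l) := by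
    intro k hk l hl hΦ
    apply hhom
    intro x
    have hk' : dist (f k x) (f k (s x)) < ε := by
      refine hec k ?_ x (s x) (hsd x)
      simpa using hk
    have hl' : dist (f l x) (f l (s x)) < ε := by
      refine hec l ?_ x (s x) (hsd x)
      simpa using hl
    have heq : c (f k (s x)) = c (f l (s x)) := by
      have := congrFun hΦ ⟨s x, hsS x⟩
      exact Subtype.ext_iff.mp this
    have h1 : dist (f k (s x)) (c (f k (s x))) < ε := hcd _
    have h2 : dist (f l (s x)) (c (f l (s x))) < ε := hcd _
    have h3 : dist (f k (s x)) (f l (s x)) < ε + ε := by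
      calc dist (f k (s x)) (f l (s x))
          ≤ dist (f k (s x)) (c (f k (s x))) + dist (c (f k (s x))) (f l (s x)) :=
            dist_triangle _ _ _
        _ < ε + ε := by
            have h2' : dist (c (f k (s x))) (f l (s x)) < ε := by
              rw [heq, dist_comm]; exact h2
            exact add_lt_add h1 h2'
    have h4 : dist (f k x) (f l x) < 4 * ε := by
      calc dist (f k x) (f l x)
          ≤ dist (f k x) (f k (s x)) + dist (f k (s x)) (f l (s x)) +
              dist (f l (s x)) (f l x) := dist_triangle4 _ _ _ _
        _ < ε + (ε + ε) + ε := by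
            refine add_lt_add (add_lt_add hk' h3) ?_
            rwa [dist_comm]
        _ = 4 * ε := by ring
    exact h4.le
  classical
  set ψ : (S → T) → Quotient (homotopicSetoid X Y) := fun v =>
    if h : ∃ k, k ∉ F ∧ Φ k = v then q (f h.choose) else q (f 0) with hψ
  have hsub : (Set.range fun k => Quotient.mk (homotopicSetoid X Y) (f k)) ⊆
      (fun k => q (f k)) '' (F : Set ℕ) ∪ ψ '' Set.univ := by
    rintro - ⟨k, rfl⟩
    by_cases hk : k ∈ F
    · exact Or.inl ⟨k, hk, rfl⟩
    · refine Or.inr ⟨Φ k, Set.mem_univ _, ?_⟩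
      have h : ∃ m, m ∉ F ∧ Φ m = Φ k := ⟨k, hk, rfl⟩
      have hch := h.choose_spec
      rw [hψ]
      simp only [dif_pos h]
      exact Quotient.sound (key _ hch.1 _ hk hch.2)
  exact Set.Finite.subset ((F.finite_toSet.image _).union (Set.finite_univ.image _)) hsub
end

section
/- Let M and V be compact metric spaces and suppose there exists ε > 0 such that any two continuous maps from M to V that are 4ε-close are homotopic. For each k ∈ ℕ let N_k be a metric space, f_k : M → N_k a continuous map, and h_k : V → N_k a topological embedding with f_k(M) ⊆ h_k(V). Assume that the sequence (f_k) is almost equicontinuous and that the sequence of inverse maps (h_k⁻¹ : h_k(V) → V) is almost equicontinuous. Then the continuous maps h_k⁻¹ ∘ f_k : M → V fall into finitely many homotopy classes; consequently, there is a finite set F ⊆ ℕ such that for every k ∈ ℕ there exists j ∈ F with f_k homotopic, as a map M → N_k, to h_k ∘ h_j⁻¹ ∘ f_j. -/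
/-!
After discarding finitely many indices, the maps `φ k = (h k)⁻¹ ∘ f k` share a modulus of
continuity `(δ, ε)`, since they are composites of the almost equicontinuous families `f k` and
`(h k)⁻¹`. Fix a finite `δ`-net of `M` and a finite `ε`-net of `V`; recording, for each net point
of `M`, a point of the `ε`-net near its image assigns to every `φ k` one of finitely many patterns.
Two maps with the same pattern are `4ε`-close, hence homotopic, so one representative per pattern
(together with the discarded indices) gives the finite set `F`. Composing with `h k` transports
the classification to the maps `f k = h k ∘ φ k`.
-/

open Metric

theorem exists_finset_forall_exists_mem_apply_eq {ι β : Type*} [Finite β] (I : Set ι)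
    (σ : ι → β) : ∃ F : Finset ι, ↑F ⊆ I ∧ ∀ i ∈ I, ∃ j ∈ F, σ j = σ i := by
  classical
  obtain ⟨F, hFI, hF⟩ :=
    Finset.subset_set_image_iff.mp (Set.toFinite (σ '' I)).coe_toFinset.subset
  refine ⟨F, hFI, fun i hi => ?_⟩
  have : σ i ∈ F.image σ := by
    rw [hF]
    exact (Set.toFinite _).mem_toFinset.mpr ⟨i, hi, rfl⟩
  simpa using this

theorem exists_finset_discretization (X : Type*) [PseudoMetricSpace X] [CompactSpace X]
    {δ : ℝ} (hδ : 0 < δ) : ∃ (s : Finset X) (c : X → s), ∀ x, dist x (c x : X) < δ := by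
  obtain ⟨s, -, hs⟩ :=
    isCompact_univ.elim_nhds_subcover (fun x : X => ball x δ) fun x _ => ball_mem_nhds x hδ
  have hx : ∀ x : X, ∃ y : s, dist x y < δ := fun x => by simpa using hs (Set.mem_univ x)
  choose c hc using hx
  exact ⟨s, c, hc⟩

theorem dist_lt_four_mul_of_dist_lt_on_net {M V : Type*} [PseudoMetricSpace M]
    [PseudoMetricSpace V] {g₁ g₂ : M → V} {c : M → M} {δ ε : ℝ} (hc : ∀ x, dist x (c x) < δ)
    (hg₁ : ∀ x x', dist x x' < δ → dist (g₁ x) (g₁ x') < ε)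
    (hg₂ : ∀ x x', dist x x' < δ → dist (g₂ x) (g₂ x') < ε)
    (hnet : ∀ x, dist (g₁ (c x)) (g₂ (c x)) < 2 * ε) (x : M) :
    dist (g₁ x) (g₂ x) < 4 * ε :=
  calc dist (g₁ x) (g₂ x)
      ≤ dist (g₁ x) (g₁ (c x)) + dist (g₁ (c x)) (g₂ (c x)) + dist (g₂ (c x)) (g₂ x) :=
        dist_triangle4 _ _ _ _
    _ < ε + 2 * ε + ε := by
        gcongr
        · exact hg₁ _ _ (hc x)
        · exact hnet x
        · rw [dist_comm]; exact hg₂ _ _ (hc x)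
    _ = 4 * ε := by ring

theorem IsEquicontFamily.exists_finset_forall_exists_dist_lt {M V : Type*} [MetricSpace M]
    [CompactSpace M] [MetricSpace V] [CompactSpace V] {I : Set ℕ} {φ : ℕ → M → V} {ε : ℝ}
    (hε : 0 < ε) (hφ : IsEquicontFamily (X := fun _ => M) (Y := fun _ => V) I φ ε) :
    ∃ F : Finset ℕ, ∀ k ∈ I, ∃ j ∈ F, ∀ x, dist (φ k x) (φ j x) < 4 * ε := by
  obtain ⟨δ, hδ, hφ⟩ := hφ
  obtain ⟨s, a, ha⟩ := exists_finset_discretization M hδ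
  obtain ⟨t, b, hb⟩ := exists_finset_discretization V hε
  obtain ⟨F, hFI, hF⟩ := exists_finset_forall_exists_mem_apply_eq I
    fun k (y : s) => b (φ k y)
  refine ⟨F, fun k hk => ?_⟩
  obtain ⟨j, hjF, hjk⟩ := hF k hk
  refine ⟨j, hjF, dist_lt_four_mul_of_dist_lt_on_net ha (hφ k hk) (hφ j (hFI hjF)) fun x => ?_⟩
  have hb_eq : b (φ j (a x)) = b (φ k (a x)) := congrFun hjk (a x)
  calc dist (φ k (a x)) (φ j (a x))
      ≤ dist (φ k (a x)) (b (φ k (a x))) + dist (b (φ j (a x)) : V) (φ j (a x)) := by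
        rw [hb_eq]; exact dist_triangle _ _ _
    _ < ε + ε := by
        gcongr
        · exact hb _
        · rw [dist_comm]; exact hb _
    _ = 2 * ε := by ring

theorem IsAlmostEquicont.exists_finset_forall_exists_dist_lt {M V : Type*} [MetricSpace M]
    [CompactSpace M] [MetricSpace V] [CompactSpace V] {φ : ℕ → M → V}
    (hφ : IsAlmostEquicont (X := fun _ => M) (Y := fun _ => V) φ) {ε : ℝ} (hε : 0 < ε) :
    ∃ F : Finset ℕ, ∀ k, ∃ j ∈ F, ∀ x, dist (φ k x) (φ j x) < 4 * ε := by
  obtain ⟨F₀, hF₀⟩ := hφ ε hε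
  obtain ⟨F, hF⟩ := hF₀.exists_finset_forall_exists_dist_lt hε
  refine ⟨F₀ ∪ F, fun k => ?_⟩
  by_cases hk : k ∈ F₀
  · exact ⟨k, Finset.mem_union_left _ hk, fun x => by simpa using mul_pos four_pos hε⟩
  · obtain ⟨j, hj, hjk⟩ := hF k hk
    exact ⟨j, Finset.mem_union_right _ hj, hjk⟩

section Composition

variable {X Y Z : ℕ → Type*} [∀ k, MetricSpace (X k)] [∀ k, MetricSpace (Y k)]
  [∀ k, MetricSpace (Z k)]

theorem IsAlmostEquicont.comp {g : ∀ k, Y k → Z k} {f : ∀ k, X k → Y k}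
    (hg : IsAlmostEquicont g) (hf : IsAlmostEquicont f) :
    IsAlmostEquicont fun k => g k ∘ f k := by
  intro ε hε
  obtain ⟨G, η, hη, hG⟩ := hg ε hε
  obtain ⟨F, δ, hδ, hF⟩ := hf η hη
  refine ⟨G ∪ F, δ, hδ, fun k hk x x' hxx' => hG k ?_ _ _ (hF k ?_ x x' hxx')⟩ <;>
    simp_all

theorem IsAlmostEquicont.codRestrict {f : ∀ k, X k → Y k} (hf : IsAlmostEquicont f)
    {S : ∀ k, Set (Y k)} (hS : ∀ k x, f k x ∈ S k) :
    IsAlmostEquicont fun k => Set.codRestrict (f k) (S k) (hS k) :=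
  hf

end Composition

/-- Let `M`, `V` be compact metric spaces such that for some `ε > 0` any two `4ε`-close
continuous maps `M → V` are homotopic.  For each `k` let `f k : M → N k` be continuous,
`h k : V → N k` a topological embedding with `f k '' M ⊆ h k '' V`; here `φ k : M → V` is
the map `(h k)⁻¹ ∘ f k` and `ψ k : h k '' V → V` is the inverse of `h k`.  If `(f k)` is
almost equicontinuous and the inverse maps `(ψ k)` are almost equicontinuous, then the maps
`φ k = (h k)⁻¹ ∘ f k` fall into finitely many homotopy classes; consequently there is a
finite `F ⊆ ℕ` such that every `f k` is homotopic to `h k ∘ (h j)⁻¹ ∘ f j` for some `j ∈ F`. -/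
theorem finitely_many_classes_of_almost_equicont_into_bounded_geometry
    {M V : Type*} [MetricSpace M] [CompactSpace M] [MetricSpace V] [CompactSpace V]
    {N : ℕ → Type*} [∀ k, MetricSpace (N k)]
    (ε : ℝ) (hε : 0 < ε)
    (hclose : ∀ f g : C(M, V), (∀ x, dist (f x) (g x) ≤ 4 * ε) → f.Homotopic g)
    (f : ∀ k, C(M, N k)) (h : ∀ k, V → N k)
    (hemb : ∀ k, Topology.IsEmbedding (h k))
    (ψ : ∀ k, (Set.range (h k) : Set (N k)) → V)
    (hψ : ∀ (k : ℕ) (v : V), ψ k ⟨h k v, Set.mem_range_self v⟩ = v)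
    (φ : ∀ k, M → V) (hφ : ∀ (k : ℕ) (x : M), h k (φ k x) = f k x)
    (hφc : ∀ k, Continuous (φ k))
    (hfae : IsAlmostEquicont (X := fun _ => M) (Y := N) (fun k => ⇑(f k)))
    (hψae : IsAlmostEquicont (X := fun k => (Set.range (h k) : Set (N k)))
      (Y := fun _ => V) ψ) :
    (∃ F : Finset ℕ, ∀ k : ℕ, ∃ j ∈ F,
        (⟨φ k, hφc k⟩ : C(M, V)).Homotopic ⟨φ j, hφc j⟩) ∧
      ∃ F : Finset ℕ, ∀ k : ℕ, ∃ j ∈ F,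
        (f k).Homotopic
          ((⟨h k, (hemb k).continuous⟩ : C(V, N k)).comp ⟨φ j, hφc j⟩) := by
  have hφ_eq : φ = fun k => ψ k ∘ Set.codRestrict (f k) _ fun x => ⟨φ k x, hφ k x⟩ := by
    funext k x
    exact (hψ k (φ k x)).symm.trans (congrArg (ψ k) (Subtype.ext (hφ k x)))
  have hφae : IsAlmostEquicont (X := fun _ => M) (Y := fun _ => V) φ :=
    hφ_eq ▸ hψae.comp (hfae.codRestrict _)
  obtain ⟨F, hF⟩ := hφae.exists_finset_forall_exists_dist_lt hε
  have hclasses : ∀ k, ∃ j ∈ F, (⟨φ k, hφc k⟩ : C(M, V)).Homotopic ⟨φ j, hφc j⟩ := fun k =>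
    let ⟨j, hj, hjk⟩ := hF k
    ⟨j, hj, hclose _ _ fun x => (hjk x).le⟩
  refine ⟨⟨F, hclasses⟩, F, fun k => ?_⟩
  obtain ⟨j, hj, hjk⟩ := hclasses k
  have hfk : f k = (⟨h k, (hemb k).continuous⟩ : C(V, N k)).comp ⟨φ k, hφc k⟩ := by
    ext x
    exact (hφ k x).symm
  exact ⟨j, hj, hfk ▸ (ContinuousMap.Homotopic.refl _).comp hjk⟩
end

section
/- Let X be a locally compact metric space. Then X is locally interior if and only if for every point x ∈ X there exists ε > 0 such that for all y, z in the open ball B(x, ε) there exists a sequence of points p_n ∈ B(x, 2ε) with dist(p_n, y) → dist(y, z)/2 and dist(p_n, z) → dist(y, z)/2 as n → ∞. -/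
open Filter

/-- The length of a path `γ` in a metric space: its total variation, i.e. the supremum over
all partitions `t₀ ≤ t₁ ≤ … ≤ tₙ` of `[0,1]` of `Σ dist (γ tᵢ₋₁) (γ tᵢ)` (with value
in `ℝ≥0∞`). -/
noncomputable def pathLength {X : Type*} [MetricSpace X] {y z : X} (γ : Path y z) : ENNReal :=
  eVariationOn γ Set.univ

/-- A metric space is locally interior if every point has an `ε > 0` such that the distance
between any two points of `B(x, ε)` equals the infimum of the lengths of paths joining
them. -/
def LocallyInterior (X : Type*) [MetricSpace X] : Prop :=
  ∀ x : X, ∃ ε > 0, ∀ y ∈ Metric.ball x ε, ∀ z ∈ Metric.ball x ε,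
    edist y z = ⨅ γ : Path y z, pathLength γ

/-!
If distances are infima of path lengths, a nearly shortest path from `y` to `z` passes, by the
intermediate value theorem, through a point equidistant from `y` and `z`, which is then an
approximate midpoint.

Conversely, inside a compact ball approximate midpoints can be inserted dyadically: level
`n + 1` puts a midpoint with error `η / 4 ^ (n + 1)` between consecutive points of level `n`, so
every dyadic polygon has length below `dist y z + η`. The maps sending `t` to the point of level
`n` with index `⌊t 2ⁿ⌋` then converge, by completeness of the ball, to a
`(dist y z + η)`-Lipschitz path from `y` to `z`.
-/

open Metric Set
open scoped NNReal Topology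

section PathLength

variable {X : Type*} [MetricSpace X] {y z : X}

lemma edist_add_edist_le_pathLength (γ : Path y z) (t : unitInterval) :
    edist y (γ t) + edist (γ t) z ≤ pathLength γ := by
  have h0t : edist y (γ t) ≤ eVariationOn γ (univ ∩ Icc 0 t) := by
    simpa using eVariationOn.edist_le γ (s := univ ∩ Icc 0 t) (x := 0)
      ⟨trivial, le_rfl, unitInterval.nonneg'⟩ ⟨trivial, unitInterval.nonneg', le_rfl⟩
  have ht1 : edist (γ t) z ≤ eVariationOn γ (univ ∩ Icc t 1) := by
    simpa using eVariationOn.edist_le γ (s := univ ∩ Icc t 1) (y := 1)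
      ⟨trivial, le_rfl, unitInterval.le_one'⟩ ⟨trivial, unitInterval.le_one', le_rfl⟩
  calc edist y (γ t) + edist (γ t) z
      ≤ eVariationOn γ (univ ∩ Icc 0 t) + eVariationOn γ (univ ∩ Icc t 1) := add_le_add h0t ht1
    _ = eVariationOn γ (univ ∩ Icc 0 1) :=
      eVariationOn.Icc_add_Icc γ unitInterval.nonneg' unitInterval.le_one' trivial
    _ ≤ pathLength γ := eVariationOn.mono γ (subset_univ _)

lemma edist_le_pathLength (γ : Path y z) : edist y z ≤ pathLength γ := by
  simpa [pathLength] using eVariationOn.edist_le γ (mem_univ 0) (mem_univ 1)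

lemma pathLength_le_of_lipschitzWith {L : ℝ≥0} (γ : Path y z) (hγ : LipschitzWith L γ) :
    pathLength γ ≤ L := by
  have hext : LipschitzWith L γ.extend := by
    have := hγ.comp (LipschitzWith.projIcc zero_le_one)
    rwa [mul_one] at this
  have hval : eVariationOn (Subtype.val : unitInterval → ℝ) univ = 1 := by
    rw [← Function.id_comp Subtype.val,
      eVariationOn.comp_eq_of_monotoneOn id Subtype.val fun _ _ _ _ h => h, image_univ,
      Subtype.range_coe, eVariationOn_id_Icc]
    simp
  calc pathLength γ = eVariationOn (γ.extend ∘ Subtype.val) univ := by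
        simp only [pathLength, Function.comp_def, Path.extend_extends']
    _ ≤ L * eVariationOn (Subtype.val : unitInterval → ℝ) univ :=
      hext.lipschitzOnWith.comp_eVariationOn_le (mapsTo_univ _ _)
    _ = L := by rw [hval, mul_one]

end PathLength

section ApproxMidpoints

variable {X : Type*} [PseudoMetricSpace X]

def HasApproxMidpoints (s : Set X) (y z : X) : Prop :=
  ∀ δ > 0, ∃ p ∈ s, dist p y ≤ dist y z / 2 + δ ∧ dist p z ≤ dist y z / 2 + δ

variable {s t : Set X} {y z : X}

lemma HasApproxMidpoints.mono (h : HasApproxMidpoints s y z) (hst : s ⊆ t) :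
    HasApproxMidpoints t y z := fun δ hδ =>
  let ⟨p, hp, hpy, hpz⟩ := h δ hδ
  ⟨p, hst hp, hpy, hpz⟩

lemma HasApproxMidpoints.inter_ball (h : HasApproxMidpoints s y z) {r : ℝ}
    (hr : dist y z / 2 < r) : HasApproxMidpoints (s ∩ ball y r) y z := by
  intro δ hδ
  obtain ⟨p, hp, hpy, hpz⟩ := h (min δ ((r - dist y z / 2) / 2)) (by positivity)
  have hδ' := min_le_left δ ((r - dist y z / 2) / 2)
  have hr' := min_le_right δ ((r - dist y z / 2) / 2)
  exact ⟨p, ⟨hp, mem_ball.2 (by linarith)⟩, by linarith, by linarith⟩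

lemma hasApproxMidpoints_iff_exists_seq :
    HasApproxMidpoints s y z ↔ ∃ p : ℕ → X, (∀ n, p n ∈ s) ∧
      Tendsto (fun n => dist (p n) y) atTop (𝓝 (dist y z / 2)) ∧
      Tendsto (fun n => dist (p n) z) atTop (𝓝 (dist y z / 2)) := by
  constructor
  · intro h
    choose p hps hpy hpz using fun n : ℕ => h (1 / (n + 1)) (by positivity)
    have hdev (n : ℕ) : |dist (p n) y - dist y z / 2| ≤ 1 / (n + 1) ∧
        |dist (p n) z - dist y z / 2| ≤ 1 / (n + 1) := by
      have := dist_triangle_left y z (p n)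
      simp only [abs_le]
      refine ⟨⟨?_, ?_⟩, ?_, ?_⟩ <;> linarith [hpy n, hpz n]
    refine ⟨p, hps, ?_, ?_⟩ <;> rw [tendsto_iff_dist_tendsto_zero] <;>
      refine squeeze_zero (fun _ => dist_nonneg) (fun n => ?_)
        tendsto_one_div_add_atTop_nhds_zero_nat <;> rw [Real.dist_eq]
    exacts [(hdev n).1, (hdev n).2]
  · rintro ⟨p, hps, hpy, hpz⟩ δ hδ
    have hy := hpy.eventually (eventually_le_nhds (lt_add_of_pos_right _ hδ))
    have hz := hpz.eventually (eventually_le_nhds (lt_add_of_pos_right _ hδ))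
    obtain ⟨n, hny, hnz⟩ := (hy.and hz).exists
    exact ⟨p n, hps n, hny, hnz⟩

lemma Path.exists_dist_eq_dist (γ : Path y z) : ∃ t, dist (γ t) y = dist (γ t) z := by
  have hcont : Continuous fun t => dist (γ t) y - dist (γ t) z := by fun_prop
  obtain ⟨t, ht⟩ := intermediate_value_univ 0 1 hcont (show (0 : ℝ) ∈ Icc _ _ by simp)
  exact ⟨t, sub_eq_zero.1 ht⟩

end ApproxMidpoints

lemma dist_le_mul_dist_of_dist_succ_le {X : Type*} [PseudoMetricSpace X] {u : ℕ → X} {b : ℝ}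
    (h : ∀ j, dist (u j) (u (j + 1)) ≤ b) (i k : ℕ) : dist (u i) (u k) ≤ b * dist i k := by
  wlog hik : i ≤ k generalizing i k
  · rw [dist_comm, dist_comm i]
    exact this k i (le_of_not_ge hik)
  calc dist (u i) (u k) ≤ ∑ _ ∈ Finset.Ico i k, b := dist_le_Ico_sum_of_dist_le hik fun _ _ => h _
    _ = b * dist i k := by
      rw [Finset.sum_const, Nat.card_Ico, nsmul_eq_mul, Nat.dist_eq, Nat.cast_sub hik,
        abs_sub_comm, abs_of_nonneg (by simpa using hik), mul_comm]

lemma dist_natFloor_natFloor_le (a b : ℝ) : dist ⌊a⌋₊ ⌊b⌋₊ ≤ dist a b + 1 := by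
  wlog hab : a ≤ b generalizing a b
  · rw [dist_comm, dist_comm a]
    exact this b a (le_of_not_ge hab)
  have hfloor_le : (⌊b⌋₊ : ℝ) ≤ max b 0 := by
    rcases le_total 0 b with hb | hb
    · exact (Nat.floor_le hb).trans (le_max_left _ _)
    · simp [Nat.floor_eq_zero.2 (by linarith : b < 1)]
  have hlt_floor : max a 0 < ⌊a⌋₊ + 1 := max_lt (Nat.lt_floor_add_one a) (by positivity)
  have hmax : max b 0 - max a 0 ≤ b - a := by
    rcases le_total 0 a with ha | ha <;> rcases le_total 0 b with hb | hb <;>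
      simp [ha, hb] <;> linarith
  rw [Nat.dist_eq, Real.dist_eq, abs_sub_comm,
    abs_of_nonneg (by simpa using Nat.floor_le_floor hab), abs_sub_comm,
    abs_of_nonneg (by linarith)]
  linarith

section DyadicGrid

variable {X : Type*}

/-- `dyadicGrid mid y z n j` is the point at time `j / 2 ^ n` of a path from `y` to `z`
(it is `z` for `j ≥ 2 ^ n`): level `n + 1` keeps the points of level `n` at even indices and
puts `mid n` of two neighbours of level `n` at odd indices. -/
def dyadicGrid (mid : ℕ → X → X → X) (y z : X) : ℕ → ℕ → X
  | 0, j => if j = 0 then y else z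
  | n + 1, j =>
    if 2 ^ (n + 1) ≤ j then z
    else if Even j then dyadicGrid mid y z n (j / 2)
    else mid n (dyadicGrid mid y z n (j / 2)) (dyadicGrid mid y z n (j / 2 + 1))

variable (mid : ℕ → X → X → X) (y z : X)

lemma dyadicGrid_of_le {n j : ℕ} (hj : 2 ^ n ≤ j) : dyadicGrid mid y z n j = z := by
  cases n with
  | zero => simp [dyadicGrid, Nat.one_le_iff_ne_zero.1 (by simpa using hj)]
  | succ n => simp [dyadicGrid, hj]

@[simp]
lemma dyadicGrid_zero_right (n : ℕ) : dyadicGrid mid y z n 0 = y := by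
  induction n with
  | zero => simp [dyadicGrid]
  | succ n ih => simpa [dyadicGrid] using ih

lemma dyadicGrid_succ_two_mul (n j : ℕ) :
    dyadicGrid mid y z (n + 1) (2 * j) = dyadicGrid mid y z n j := by
  rcases le_or_gt (2 ^ n) j with hj | hj
  · rw [dyadicGrid_of_le mid y z hj, dyadicGrid_of_le mid y z (by rw [pow_succ']; omega)]
  · simp [dyadicGrid, pow_succ', hj]

lemma dyadicGrid_succ_two_mul_add_one {n j : ℕ} (hj : j < 2 ^ n) :
    dyadicGrid mid y z (n + 1) (2 * j + 1) =
      mid n (dyadicGrid mid y z n j) (dyadicGrid mid y z n (j + 1)) := by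
  have : ¬ 2 ^ (n + 1) ≤ 2 * j + 1 := by rw [pow_succ']; omega
  simp [dyadicGrid, this, Nat.add_div_of_dvd_right]

end DyadicGrid

section DyadicGridDist

variable {X : Type*} [PseudoMetricSpace X] (mid : ℕ → X → X → X) (y z : X)

lemma dyadicGrid_mem_closedBall {n : ℕ} {b R : ℝ}
    (hb : ∀ j, dist (dyadicGrid mid y z n j) (dyadicGrid mid y z n (j + 1)) ≤ b)
    (hbR : 2 ^ n * b ≤ R) (hzR : dist z y ≤ R) (j : ℕ) :
    dyadicGrid mid y z n j ∈ closedBall y R := by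
  rw [mem_closedBall]
  rcases le_or_gt (2 ^ n) j with hj | hj
  · rwa [dyadicGrid_of_le mid y z hj]
  have hb0 : 0 ≤ b := dist_nonneg.trans (hb 0)
  calc dist (dyadicGrid mid y z n j) y
      = dist (dyadicGrid mid y z n j) (dyadicGrid mid y z n 0) := by simp
    _ ≤ b * dist j 0 := dist_le_mul_dist_of_dist_succ_le hb j 0
    _ ≤ b * 2 ^ n := by
      rw [Nat.dist_eq, Nat.cast_zero, sub_zero, Nat.abs_cast]
      gcongr
      exact_mod_cast hj.le
    _ ≤ R := by linarith

lemma dist_dyadicGrid_succ_le {n : ℕ} {b δ : ℝ} (hδ : 0 ≤ δ)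
    (hb : ∀ j, dist (dyadicGrid mid y z n j) (dyadicGrid mid y z n (j + 1)) ≤ b)
    (hmid : ∀ j,
      dist (mid n (dyadicGrid mid y z n j) (dyadicGrid mid y z n (j + 1)))
          (dyadicGrid mid y z n j) ≤
        dist (dyadicGrid mid y z n j) (dyadicGrid mid y z n (j + 1)) / 2 + δ ∧
      dist (mid n (dyadicGrid mid y z n j) (dyadicGrid mid y z n (j + 1)))
          (dyadicGrid mid y z n (j + 1)) ≤
        dist (dyadicGrid mid y z n j) (dyadicGrid mid y z n (j + 1)) / 2 + δ) (j : ℕ) :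
    dist (dyadicGrid mid y z (n + 1) j) (dyadicGrid mid y z (n + 1) (j + 1)) ≤ b / 2 + δ := by
  obtain ⟨k, rfl | rfl⟩ := Nat.even_or_odd' j
  all_goals rcases lt_or_ge k (2 ^ n) with hk | hk
  · rw [dyadicGrid_succ_two_mul, dyadicGrid_succ_two_mul_add_one mid y z hk, dist_comm]
    linarith [(hmid k).1, hb k]
  · rw [dyadicGrid_of_le mid y z (by rw [pow_succ']; omega),
      dyadicGrid_of_le mid y z (by rw [pow_succ']; omega), dist_self]
    linarith [dist_nonneg.trans (hb 0)]
  · rw [dyadicGrid_succ_two_mul_add_one mid y z hk, show 2 * k + 1 + 1 = 2 * (k + 1) by ring,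
      dyadicGrid_succ_two_mul]
    linarith [(hmid k).2, hb k]
  · rw [dyadicGrid_of_le mid y z (by rw [pow_succ']; omega),
      dyadicGrid_of_le mid y z (by rw [pow_succ']; omega), dist_self]
    linarith [dist_nonneg.trans (hb 0)]

lemma dist_dyadicGrid_floor_succ_le {n : ℕ} {b : ℝ}
    (hb : ∀ j, dist (dyadicGrid mid y z (n + 1) j) (dyadicGrid mid y z (n + 1) (j + 1)) ≤ b)
    (t : ℝ) :
    dist (dyadicGrid mid y z n ⌊t * 2 ^ n⌋₊) (dyadicGrid mid y z (n + 1) ⌊t * 2 ^ (n + 1)⌋₊) ≤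
      b := by
  have hfloor : ⌊t * 2 ^ n⌋₊ = ⌊t * 2 ^ (n + 1)⌋₊ / 2 := by
    rw [← Nat.floor_div_ofNat, pow_succ, ← mul_assoc, mul_div_cancel_right₀ _ two_ne_zero]
  have hparity (k : ℕ) : dist (2 * (k / 2)) k ≤ 1 := by
    obtain ⟨q, rfl | rfl⟩ := Nat.even_or_odd' k <;> simp [Nat.dist_eq, Nat.mul_add_div]
  rw [hfloor, ← dyadicGrid_succ_two_mul]
  calc _ ≤ b * dist (2 * (⌊t * 2 ^ (n + 1)⌋₊ / 2)) ⌊t * 2 ^ (n + 1)⌋₊ :=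
        dist_le_mul_dist_of_dist_succ_le hb _ _
    _ ≤ b * 1 := by gcongr; exacts [dist_nonneg.trans (hb 0), hparity _]
    _ = b := mul_one b

lemma dist_dyadicGrid_floor_le {n : ℕ} {b : ℝ}
    (hb : ∀ j, dist (dyadicGrid mid y z n j) (dyadicGrid mid y z n (j + 1)) ≤ b) (s t : ℝ) :
    dist (dyadicGrid mid y z n ⌊s * 2 ^ n⌋₊) (dyadicGrid mid y z n ⌊t * 2 ^ n⌋₊) ≤
      b * (2 ^ n * dist s t + 1) := by
  calc _ ≤ b * dist ⌊s * 2 ^ n⌋₊ ⌊t * 2 ^ n⌋₊ := dist_le_mul_dist_of_dist_succ_le hb _ _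
    _ ≤ b * (dist (s * 2 ^ n) (t * 2 ^ n) + 1) := by
      gcongr
      exacts [dist_nonneg.trans (hb 0), dist_natFloor_natFloor_le _ _]
    _ = b * (2 ^ n * dist s t + 1) := by
      rw [Real.dist_eq, Real.dist_eq, ← sub_mul, abs_mul,
        abs_of_pos (by positivity : (0 : ℝ) < 2 ^ n), mul_comm (|s - t|)]

end DyadicGridDist

lemma exists_lipschitzWith_tendsto_of_dist_le {X α : Type*} [PseudoMetricSpace X]
    [PseudoMetricSpace α] {S : Set X} (hS : IsComplete S) {F : ℕ → α → X}
    (hFS : ∀ n t, F n t ∈ S) {C : ℝ} {L : ℝ≥0}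
    (hsucc : ∀ n t, dist (F n t) (F (n + 1) t) ≤ C / 2 / 2 ^ n)
    (happrox : ∀ n s t, dist (F n s) (F n t) ≤ L * dist s t + C / 2 ^ n) :
    ∃ f : α → X, LipschitzWith L f ∧ ∀ t, Tendsto (F · t) atTop (𝓝 (f t)) := by
  have hlim (t : α) : ∃ x, Tendsto (F · t) atTop (𝓝 x) :=
    let ⟨x, _, hx⟩ := cauchySeq_tendsto_of_isComplete hS (hFS · t)
      (cauchySeq_of_le_geometric_two (hsucc · t))
    ⟨x, hx⟩
  choose f hf using hlim
  refine ⟨f, LipschitzWith.of_dist_le_mul fun s t => ?_, hf⟩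
  have hC : Tendsto (fun n : ℕ => L * dist s t + C / 2 ^ n) atTop (𝓝 (L * dist s t + 0)) :=
    tendsto_const_nhds.add
      (tendsto_const_nhds.div_atTop (tendsto_pow_atTop_atTop_of_one_lt one_lt_two))
  simpa using le_of_tendsto_of_tendsto' ((hf s).dist (hf t)) hC (happrox · s t)

section DyadicGridOfApproxMidpoints

variable {X : Type*} [PseudoMetricSpace X] {y z : X}

/-- The bound `b n` on the steps of level `n` solves `b (n + 1) = b n / 2 + η / 4 ^ (n + 1)`,
`b 0 = dist y z`, so the polygon of level `n` has length `2 ^ n * b n < dist y z + η`. -/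
lemma dist_dyadicGrid_le_of_approxMidpoint {m : X → X → ℝ → X} {η R : ℝ} (hη : 0 < η)
    (hR : dist y z + η ≤ R)
    (hm : ∀ a ∈ closedBall y R, ∀ b ∈ closedBall y R, ∀ δ > 0,
      dist (m a b δ) a ≤ dist a b / 2 + δ ∧ dist (m a b δ) b ≤ dist a b / 2 + δ) (n j : ℕ) :
    dist (dyadicGrid (fun n a b => m a b (η / 4 ^ (n + 1))) y z n j)
        (dyadicGrid (fun n a b => m a b (η / 4 ^ (n + 1))) y z n (j + 1)) ≤
      (dist y z + η * (1 - 1 / 2 ^ n)) / 2 ^ n := by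
  set g := dyadicGrid (fun n a b => m a b (η / 4 ^ (n + 1))) y z
  induction n generalizing j with
  | zero =>
    rcases j.eq_zero_or_pos with rfl | hj
    · simp [g, dyadicGrid_of_le _ y z (show 2 ^ 0 ≤ 1 by simp)]
    · simp [g, dyadicGrid_of_le _ y z (n := 0) hj,
        dyadicGrid_of_le _ y z (show 2 ^ 0 ≤ j + 1 by simp)]
  | succ n ih =>
    have hmem : ∀ j, g n j ∈ closedBall y R := by
      refine dyadicGrid_mem_closedBall _ y z ih ?_ (by rw [dist_comm]; linarith)
      rw [mul_div_cancel₀ _ (by positivity)]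
      have : η * (1 - 1 / 2 ^ n) ≤ η :=
        mul_le_of_le_one_right hη.le (sub_le_self _ (by positivity))
      linarith
    convert dist_dyadicGrid_succ_le _ y z (by positivity) ih
      (fun j => hm _ (hmem j) _ (hmem (j + 1)) _ (by positivity)) j using 1
    rw [show (4 : ℝ) ^ (n + 1) = 2 ^ (n + 1) * 2 ^ (n + 1) by rw [← mul_pow]; norm_num]
    field_simp
    ring

end DyadicGridOfApproxMidpoints

section MetricSpace

variable {X : Type*} [MetricSpace X] {y z : X}

lemma exists_path_lipschitzWith_of_hasApproxMidpoints {η R : ℝ} (hη : 0 < η)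
    (hR : dist y z + η ≤ R) (hS : IsComplete (closedBall y R))
    (hmid : ∀ a ∈ closedBall y R, ∀ b ∈ closedBall y R, HasApproxMidpoints univ a b) :
    ∃ γ : Path y z, LipschitzWith (dist y z + η).toNNReal γ := by
  have : Nonempty X := ⟨y⟩
  choose! m _ hm using hmid
  set g := dyadicGrid (fun n a b => m a b (η / 4 ^ (n + 1))) y z
  have hB (n j : ℕ) : dist (g n j) (g n (j + 1)) ≤ (dist y z + η) / 2 ^ n :=
    (dist_dyadicGrid_le_of_approxMidpoint hη hR hm n j).trans (by
      gcongr
      exact mul_le_of_le_one_right hη.le (sub_le_self _ (by positivity)))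
  have hmem (n j : ℕ) : g n j ∈ closedBall y R :=
    dyadicGrid_mem_closedBall _ y z (hB n) (by rwa [mul_div_cancel₀ _ (by positivity)])
      (by rw [dist_comm]; linarith) j
  have hL : ((dist y z + η).toNNReal : ℝ) = dist y z + η := Real.coe_toNNReal _ (by positivity)
  obtain ⟨f, hf, hlim⟩ := exists_lipschitzWith_tendsto_of_dist_le
    (F := fun n (t : ℝ) => g n ⌊t * 2 ^ n⌋₊) hS (fun n t => hmem n _) (C := dist y z + η)
    (L := (dist y z + η).toNNReal)
    (fun n t => (dist_dyadicGrid_floor_succ_le _ y z (hB (n + 1)) t).trans_eq (by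
      rw [pow_succ]; ring))
    (fun n s t => (dist_dyadicGrid_floor_le _ y z (hB n) s t).trans_eq (by
      rw [hL]; field_simp))
  have hf0 : f 0 = y := tendsto_nhds_unique (hlim 0) (by simp [g])
  have hf1 : f 1 = z := by
    have hfloor (n : ℕ) : ⌊(1 : ℝ) * 2 ^ n⌋₊ = 2 ^ n := by
      rw [one_mul]; exact_mod_cast Nat.floor_natCast (2 ^ n)
    refine tendsto_nhds_unique (hlim 1) ?_
    simp only [hfloor, g, dyadicGrid_of_le _ y z le_rfl, tendsto_const_nhds]
  exact ⟨⟨⟨fun t => f t, hf.continuous.comp continuous_subtype_val⟩, hf0, hf1⟩,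
    hf.lipschitzOnWith.to_restrict⟩

lemma hasApproxMidpoints_of_edist_eq_iInf_pathLength
    (h : edist y z = ⨅ γ : Path y z, pathLength γ) : HasApproxMidpoints univ y z := by
  intro δ hδ
  have hlt : ⨅ γ : Path y z, pathLength γ < edist y z + ENNReal.ofReal (2 * δ) := by
    rw [← h]
    exact ENNReal.lt_add_right (edist_ne_top y z) (by positivity)
  obtain ⟨γ, hγ⟩ := iInf_lt_iff.1 hlt
  obtain ⟨t, ht⟩ := γ.exists_dist_eq_dist
  have hsum : dist y (γ t) + dist (γ t) z < dist y z + 2 * δ := by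
    have := (edist_add_edist_le_pathLength γ t).trans_lt hγ
    rwa [edist_dist, edist_dist, edist_dist, ← ENNReal.ofReal_add dist_nonneg dist_nonneg,
      ← ENNReal.ofReal_add dist_nonneg (by positivity),
      ENNReal.ofReal_lt_ofReal_iff (by positivity)] at this
  rw [dist_comm y] at hsum
  exact ⟨γ t, trivial, by linarith, by linarith⟩

lemma edist_eq_iInf_pathLength_of_hasApproxMidpoints {R : ℝ}
    (hR : dist y z < R) (hS : IsComplete (closedBall y R))
    (hmid : ∀ a ∈ closedBall y R, ∀ b ∈ closedBall y R, HasApproxMidpoints univ a b) :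
    edist y z = ⨅ γ : Path y z, pathLength γ := by
  refine le_antisymm (le_iInf edist_le_pathLength)
    (ENNReal.le_of_forall_pos_le_add fun δ hδ _ => ?_)
  set η := min (δ : ℝ) (R - dist y z)
  have hη : 0 < η := lt_min hδ (sub_pos.2 hR)
  obtain ⟨γ, hγ⟩ := exists_path_lipschitzWith_of_hasApproxMidpoints hη
    (by linarith [min_le_right (δ : ℝ) (R - dist y z)]) hS hmid
  calc ⨅ γ : Path y z, pathLength γ ≤ (dist y z + η).toNNReal :=
        (iInf_le _ γ).trans (pathLength_le_of_lipschitzWith γ hγ)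
    _ ≤ ENNReal.ofReal (dist y z + δ) := ENNReal.ofReal_le_ofReal (by simp [η])
    _ = edist y z + δ := by
      rw [ENNReal.ofReal_add dist_nonneg δ.coe_nonneg, ← edist_dist, ENNReal.ofReal_coe_nnreal]

end MetricSpace

/-- A locally compact metric space is locally interior iff every point `x` has an `ε > 0`
such that for all `y, z ∈ B(x, ε)` there is a sequence `pₙ ∈ B(x, 2ε)` of approximate
midpoints: `dist (pₙ) y → dist y z / 2` and `dist (pₙ) z → dist y z / 2`. -/
theorem locallyInterior_iff_approx_midpoints
    (X : Type*) [MetricSpace X] [LocallyCompactSpace X] :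
    LocallyInterior X ↔
      ∀ x : X, ∃ ε > 0, ∀ y ∈ Metric.ball x ε, ∀ z ∈ Metric.ball x ε,
        ∃ p : ℕ → X, (∀ n, p n ∈ Metric.ball x (2 * ε)) ∧
          Tendsto (fun n => dist (p n) y) atTop (nhds (dist y z / 2)) ∧
          Tendsto (fun n => dist (p n) z) atTop (nhds (dist y z / 2)) := by
  simp_rw [← hasApproxMidpoints_iff_exists_seq]
  constructor
  · intro h x
    obtain ⟨ε, hε, hx⟩ := h x
    refine ⟨ε, hε, fun y hy z hz => ?_⟩
    have hyz : dist y z / 2 < ε := by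
      linarith [dist_triangle_right y z x, mem_ball.1 hy, mem_ball.1 hz]
    exact ((hasApproxMidpoints_of_edist_eq_iInf_pathLength (hx y hy z hz)).inter_ball hyz).mono
      (inter_subset_right.trans (ball_subset_ball' (by linarith [mem_ball.1 hy])))
  · intro h x
    obtain ⟨r, hr, hcompact⟩ := exists_isCompact_closedBall x
    obtain ⟨ε, hε, hx⟩ := h x
    set ρ := min ε r
    have hρ : 0 < ρ := lt_min hε hr
    refine ⟨ρ / 4, by positivity, fun y hy z hz => ?_⟩
    have hsub : closedBall y (ρ / 2) ⊆ ball x ρ :=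
      closedBall_subset_ball' (by linarith [mem_ball.1 hy])
    have hsub_r : closedBall y (ρ / 2) ⊆ closedBall x r :=
      hsub.trans (ball_subset_closedBall.trans (closedBall_subset_closedBall (min_le_right ε r)))
    have hsub_ε : closedBall y (ρ / 2) ⊆ ball x ε := hsub.trans (ball_subset_ball (min_le_left ε r))
    exact edist_eq_iInf_pathLength_of_hasApproxMidpoints
      (by linarith [dist_triangle_right y z x, mem_ball.1 hy, mem_ball.1 hz])
      (hcompact.of_isClosed_subset isClosed_closedBall hsub_r).isComplete
      fun a ha b hb => (hx a (hsub_ε ha) b (hsub_ε hb)).mono (subset_univ _)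
end
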